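/- arXiv:1705.10307 — 2 statements merged into one kernel-verified Lean document; each statement's English description precedes it below -/
import Mathlib

section
/- The projection operator 𝒯 onto the polar part of a Laurent series is a Rota–Baxter operator of weight −1: for all Laurent series f₁, f₂, one has 𝒯(f₁)𝒯(f₂) = 𝒯(f₁ 𝒯(f₂)) + 𝒯(𝒯(f₁) f₂) − 𝒯(f₁ f₂). -/
/-!
Write `f = 𝒯 f + (f - 𝒯 f)`. Since supports add under multiplication, series supported in
degrees `< 0` are closed under products, and so are those supported in degrees `≥ 0`. Hence `𝒯`
fixes `𝒯 f₁ * 𝒯 f₂` and kills `(f₁ - 𝒯 f₁) * (f₂ - 𝒯 f₂)`; expanding the latter by additivity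
of `𝒯` gives the Rota–Baxter identity.
-/

/-- The projection of a formal Laurent series onto its polar part
(the terms of strictly negative degree). -/
noncomputable def polarPart {F : Type*} [Field F] (f : LaurentSeries F) :
    LaurentSeries F :=
  { coeff := fun k => if k < 0 then f.coeff k else 0
    isPWO_support' := f.isPWO_support'.mono (by
      intro k hk
      simp only [Function.mem_support] at hk ⊢
      intro h
      simp [h] at hk) }

open Set

namespace HahnSeries

variable {Γ R : Type*} [AddCommMonoid Γ] [PartialOrder Γ] [IsOrderedCancelAddMonoid Γ]
  [NonUnitalNonAssocSemiring R] {x y : HahnSeries Γ R}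

theorem support_mul_subset_Iio_zero (hx : x.support ⊆ Iio 0) (hy : y.support ⊆ Iio 0) :
    (x * y).support ⊆ Iio 0 := by
  refine support_mul_subset.trans ((add_subset_add hx hy).trans ?_)
  rintro _ ⟨a, ha, b, hb, rfl⟩
  exact add_neg ha hb

theorem support_mul_subset_Ici_zero (hx : x.support ⊆ Ici 0) (hy : y.support ⊆ Ici 0) :
    (x * y).support ⊆ Ici 0 := by
  simpa using support_mul_subset.trans ((add_subset_add hx hy).trans (Ici_add_Ici_subset 0 0))

end HahnSeries

section PolarPart

variable {F : Type*} [Field F] (f g : LaurentSeries F)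

theorem polarPart_coeff (k : ℤ) : (polarPart f).coeff k = if k < 0 then f.coeff k else 0 := rfl

theorem polarPart_add : polarPart (f + g) = polarPart f + polarPart g := by
  ext k
  simp only [polarPart_coeff, HahnSeries.coeff_add]
  split_ifs <;> simp

theorem polarPart_sub : polarPart (f - g) = polarPart f - polarPart g := by
  ext k
  simp only [polarPart_coeff, HahnSeries.coeff_sub]
  split_ifs <;> simp

theorem support_polarPart_subset : (polarPart f).support ⊆ Iio 0 := fun k hk => by
  by_contra h
  exact hk (if_neg h)

theorem support_sub_polarPart_subset : (f - polarPart f).support ⊆ Ici 0 := fun k hk => by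
  by_contra h
  exact hk (by simp [polarPart_coeff, not_le.1 (mem_Ici.not.1 h)])

variable {f}

theorem polarPart_eq_self_of_support_subset (hf : f.support ⊆ Iio 0) : polarPart f = f := by
  ext k
  by_cases hk : k < 0
  · exact if_pos hk
  · rw [polarPart_coeff, if_neg hk, eq_comm]
    by_contra h
    exact hk (hf h)

theorem polarPart_eq_zero_of_support_subset (hf : f.support ⊆ Ici 0) : polarPart f = 0 := by
  ext k
  by_cases hk : k < 0
  · rw [polarPart_coeff, if_pos hk, HahnSeries.coeff_zero]
    by_contra h
    exact (hf h).not_gt hk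
  · exact if_neg hk

end PolarPart

/-- The projection `𝒯` onto the polar part of a Laurent series is a Rota–Baxter
operator of weight `-1`:
`𝒯(f₁)𝒯(f₂) = 𝒯(f₁ 𝒯(f₂)) + 𝒯(𝒯(f₁) f₂) − 𝒯(f₁ f₂)`. -/
theorem stmt_6 {F : Type*} [Field F] (f₁ f₂ : LaurentSeries F) :
    polarPart f₁ * polarPart f₂ =
      polarPart (f₁ * polarPart f₂) + polarPart (polarPart f₁ * f₂)
        - polarPart (f₁ * f₂) := by
  have hpolar : polarPart (polarPart f₁ * polarPart f₂) = polarPart f₁ * polarPart f₂ :=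
    polarPart_eq_self_of_support_subset <| HahnSeries.support_mul_subset_Iio_zero
      (support_polarPart_subset f₁) (support_polarPart_subset f₂)
  have hregular : polarPart ((f₁ - polarPart f₁) * (f₂ - polarPart f₂)) = 0 :=
    polarPart_eq_zero_of_support_subset <| HahnSeries.support_mul_subset_Ici_zero
      (support_sub_polarPart_subset f₁) (support_sub_polarPart_subset f₂)
  rw [show (f₁ - polarPart f₁) * (f₂ - polarPart f₂) = f₁ * f₂ - f₁ * polarPart f₂
      - polarPart f₁ * f₂ + polarPart f₁ * polarPart f₂ by ring,
    polarPart_add, polarPart_sub, polarPart_sub, hpolar] at hregular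
  linear_combination hregular
end

section
/- The determinant of the 3×3 matrix with rows (1, 1, m₁²), (ε^{2j}, ε^{2k}, m₂²), ((1+ε^j)², (1+ε^k)², m₃²) is, as a polynomial in ε, not identically zero whenever j ≠ k are positive integers and m₁, m₂, m₃ are positive rationals with m₃² ≠ m₁² + m₂²; in particular it is nonzero for all but finitely many ε. -/
open Polynomial

/-- For `j ≠ k` positive integers and positive rational masses with
`m₃² ≠ m₁² + m₂²`, the determinant of the matrix with rows
`(1, 1, m₁²)`, `(ε^{2j}, ε^{2k}, m₂²)`, `((1+ε^j)², (1+ε^k)², m₃²)` is not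
identically zero as a polynomial in `ε`; in particular it is nonzero for all but
finitely many `ε`. -/
theorem stmt_15 (j k : ℕ) (hj : 1 ≤ j) (hk : 1 ≤ k) (hjk : j ≠ k)
    (m₁ m₂ m₃ : ℚ) (hm₁ : 0 < m₁) (hm₂ : 0 < m₂) (hm₃ : 0 < m₃)
    (hm : m₃ ^ 2 ≠ m₁ ^ 2 + m₂ ^ 2)
    (p : ℚ[X])
    (hp : p = Matrix.det
      !![1, 1, C (m₁ ^ 2);
         X ^ (2 * j), X ^ (2 * k), C (m₂ ^ 2);
         (1 + X ^ j) ^ 2, (1 + X ^ k) ^ 2, C (m₃ ^ 2)]) :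
    p ≠ 0 ∧ {ε : ℚ | p.eval ε = 0}.Finite := by
  have hdet : p = C (m₃ ^ 2 - m₁ ^ 2 - m₂ ^ 2) * (X ^ (2 * k) - X ^ (2 * j))
      + C (2 * m₂ ^ 2) * (X ^ j - X ^ k)
      + C (2 * m₁ ^ 2) * (X ^ (2 * j + k) - X ^ (2 * k + j)) := by
    subst hp
    simp [Matrix.det_fin_three, map_ofNat]
    ring
  have hm₁' : m₁ ^ 2 ≠ 0 := pow_ne_zero _ hm₁.ne'
  have hne : p ≠ 0 := by
    intro h0
    rcases hjk.lt_or_gt with h | h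
    · have := congrArg (fun q => q.coeff (2 * k + j)) h0
      rw [hdet] at this
      simp only [coeff_add, coeff_C_mul, coeff_sub, coeff_X_pow, coeff_zero] at this
      split_ifs at this <;> (try omega) <;> simp_all <;> nlinarith
    · have := congrArg (fun q => q.coeff (2 * j + k)) h0
      rw [hdet] at this
      simp only [coeff_add, coeff_C_mul, coeff_sub, coeff_X_pow, coeff_zero] at this
      split_ifs at this <;> (try omega) <;> simp_all <;> nlinarith
  exact ⟨hne, Polynomial.finite_setOf_isRoot hne⟩
end
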